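/- Let H be a finite-dimensional Hopf algebra over a field k with bijective antipode, and let {e_a} be a basis of H with dual basis {f^a} of H*. Let H act on itself by left multiplication (h ⊳ g = hg) and let H* act on H by the left coregular action φ ⊳ g = Σ g₍₁₎ ⟨φ, g₍₂₎⟩. Then every linear endomorphism of H lies in the subalgebra of Lin(H) generated by these two actions; explicitly, the rank-one operator g ↦ h⟨φ, g⟩ equals the operator g ↦ Σ_a h (S⁻¹(e_a)₍₁₎) ⊳ (⟨φ, (e_a)₍₂₎⟩ f^a ⊳ g). -/

import Mathlib

open TensorProduct Coalgebra LinearMap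

variable (k H : Type*) [Field k] [Ring H] [HopfAlgebra k H]

/-- The left coregular action of `φ ∈ H*` on `H`: `φ ⊳ g = Σ g₍₁₎ ⟨φ, g₍₂₎⟩`. -/
noncomputable def coreg (φ : Module.Dual k H) : H →ₗ[k] H :=
  (TensorProduct.rid k H).toLinearMap ∘ₗ (LinearMap.lTensor H φ) ∘ₗ
    (Coalgebra.comul (R := k))

/-- For `φ ∈ H*` and a skew-antipode `S⁻¹`, the element
`Σ ⟨φ, a₍₂₎⟩ S⁻¹(a₍₁₎)` of `H`. -/
noncomputable def sweedlerWeight (Sinv : H →ₗ[k] H) (φ : Module.Dual k H) : H →ₗ[k] H :=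
  (TensorProduct.rid k H).toLinearMap ∘ₗ (LinearMap.lTensor H φ) ∘ₗ
    (LinearMap.rTensor H Sinv) ∘ₗ (Coalgebra.comul (R := k))

/-!
Expanding `f^a ⊳ g = Σ g₍₁₎ ⟨f^a, g₍₂₎⟩` in the basis collapses the sum to
`Σ h w(g₍₂₎) g₍₁₎` with `w(x) = Σ ⟨φ, x₍₂₎⟩ S⁻¹(x₍₁₎)`. By coassociativity this is
`Σ ⟨φ, g₍₂₎⟩ h S⁻¹(g₍₁₎₍₂₎) g₍₁₎₍₁₎`, and the skew-antipode identity `Σ S⁻¹(x₍₂₎) x₍₁₎ = ε(x) 1`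
(obtained by applying `S`, which reverses products) turns it into `⟨φ, g⟩ h`.
-/

section SkewAntipode

variable {R A : Type*} [CommSemiring R] [Semiring A] [HopfAlgebra R A]

theorem sum_skewAntipode_mul_eq_smul (Sinv : A →ₗ[R] A)
    (hS1 : Sinv ∘ₗ HopfAlgebra.antipode R = LinearMap.id)
    (hS2 : HopfAlgebra.antipode R ∘ₗ Sinv = LinearMap.id)
    {a : A} {ι : Type*} (r : Coalgebra.Repr R a ι) :
    ∑ i ∈ r.index, Sinv (r.right i) * r.left i = counit (R := R) a • 1 := by
  have hSinv (x : A) : Sinv (HopfAlgebra.antipode R x) = x := congr($hS1 x)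
  have hS (x : A) : HopfAlgebra.antipode R (Sinv x) = x := congr($hS2 x)
  rw [← hSinv (∑ i ∈ r.index, _), map_sum]
  simp only [HopfAlgebra.antipode_mul_antidistrib, hS]
  have hSinv_one : Sinv 1 = 1 := by simpa using hSinv 1
  rw [HopfAlgebra.sum_antipode_mul_eq_smul r, map_smul, hSinv_one]

end SkewAntipode

section CoregularAction

variable {k H}

lemma coreg_eq_sum (ψ : Module.Dual k H) {g : H} {ι : Type*} (r : Coalgebra.Repr k g ι) :
    coreg k H ψ g = ∑ i ∈ r.index, ψ (r.right i) • r.left i := by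
  simp [coreg, ← r.eq, map_sum]

lemma sweedlerWeight_eq_sum (Sinv : H →ₗ[k] H) (φ : Module.Dual k H) {x : H}
    {ι : Type*} (r : Coalgebra.Repr k x ι) :
    sweedlerWeight k H Sinv φ x = ∑ i ∈ r.index, φ (r.right i) • Sinv (r.left i) := by
  simp [sweedlerWeight, ← r.eq, map_sum]

lemma sum_mul_coreg_dualBasis {ι : Type*} [Fintype ι] [DecidableEq ι] (B : Module.Basis ι k H)
    (F : H →ₗ[k] H) {g : H} {κ : Type*} (r : Coalgebra.Repr k g κ) :
    ∑ a : ι, F (B a) * coreg k H (B.dualBasis a) g =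
      ∑ i ∈ r.index, F (r.right i) * r.left i := by
  have hF (x : H) : ∑ a : ι, B.dualBasis a x • F (B a) = F x := by
    simp_rw [Module.Basis.dualBasis_apply, ← map_smul, ← map_sum, B.sum_repr]
  simp_rw [coreg_eq_sum _ r, Finset.mul_sum, mul_smul_comm]
  rw [Finset.sum_comm]
  simp_rw [← smul_mul_assoc, ← Finset.sum_mul, hF]

lemma sum_sweedlerWeight_mul (Sinv : H →ₗ[k] H)
    (hS1 : Sinv ∘ₗ HopfAlgebra.antipode (R := k) (A := H) = LinearMap.id)
    (hS2 : HopfAlgebra.antipode (R := k) (A := H) ∘ₗ Sinv = LinearMap.id)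
    (φ : Module.Dual k H) {g : H} {ι : Type*} (r : Coalgebra.Repr k g ι) :
    ∑ i ∈ r.index, sweedlerWeight k H Sinv φ (r.right i) * r.left i = φ g • 1 := by
  let r₁ i := ℛ k (r.left i)
  let r₂ i := ℛ k (r.right i)
  -- `T (x ⊗ (y ⊗ z)) = ⟨φ, z⟩ S⁻¹(y) x`, applied to both sides of coassociativity
  let T : H ⊗[k] (H ⊗[k] H) →ₗ[k] H :=
    TensorProduct.lift ((LinearMap.mul k H).flip.compl₂
      ((TensorProduct.rid k H).toLinearMap ∘ₗ LinearMap.lTensor H φ ∘ₗ LinearMap.rTensor H Sinv))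
  have coassoc := congr(T $(Coalgebra.sum_tmul_tmul_eq r r₁ r₂))
  simp only [map_sum, T, TensorProduct.lift.tmul, LinearMap.compl₂_apply, LinearMap.flip_apply,
    LinearMap.mul_apply', LinearMap.comp_apply, LinearMap.lTensor_tmul, LinearMap.rTensor_tmul,
    LinearEquiv.coe_coe, TensorProduct.rid_tmul, smul_mul_assoc] at coassoc
  calc ∑ i ∈ r.index, sweedlerWeight k H Sinv φ (r.right i) * r.left i
      = ∑ i ∈ r.index, ∑ j ∈ (r₂ i).index,
          φ ((r₂ i).right j) • (Sinv ((r₂ i).left j) * r.left i) := by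
        simp_rw [sweedlerWeight_eq_sum Sinv φ (r₂ _), Finset.sum_mul, smul_mul_assoc]
    _ = ∑ i ∈ r.index,
          φ (r.right i) • ∑ j ∈ (r₁ i).index, Sinv ((r₁ i).right j) * (r₁ i).left j := by
        simp_rw [Finset.smul_sum, coassoc]
    _ = φ g • 1 := by
        rw [Finset.sum_congr rfl fun i _ => by
          rw [sum_skewAntipode_mul_eq_smul Sinv hS1 hS2 (r₁ i)]]
        simp_rw [smul_smul, ← Finset.sum_smul]
        conv_rhs => rw [← Coalgebra.sum_counit_smul r]
        simp only [map_sum, map_smul, smul_eq_mul, mul_comm]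

end CoregularAction

theorem rank_one_generated
    (Sinv : H →ₗ[k] H)
    (hS1 : Sinv ∘ₗ HopfAlgebra.antipode (R := k) (A := H) = LinearMap.id)
    (hS2 : HopfAlgebra.antipode (R := k) (A := H) ∘ₗ Sinv = LinearMap.id)
    {ι : Type*} [Fintype ι] [DecidableEq ι] (B : Module.Basis ι k H)
    (h : H) (φ : Module.Dual k H) (g : H) :
    φ g • h =
      ∑ a : ι, h * sweedlerWeight k H Sinv φ (B a) * coreg k H (B.dualBasis a) g := by
  simp_rw [mul_assoc, ← Finset.mul_sum, sum_mul_coreg_dualBasis B _ (ℛ k g),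
    sum_sweedlerWeight_mul Sinv hS1 hS2 φ, mul_smul_comm, mul_one]
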